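/- arXiv:2411.18210 — 2 statements merged into one kernel-verified Lean document; each statement's English description precedes it below -/
import Mathlib

section
/- Suppose A * V_m = V_m * T_m + Γ, where Γ = (V_m * W_m^T − I) * A * V_{m+1} * H_{m+1,m} * E_m^T * H_m^{-1}, the bi-orthogonality W_m^T * V_m = I_m holds, and V_m * W_m^T * B = B. If Y_m solves the reduced Lyapunov equation T_m * Y_m + Y_m * T_m^T + B_m * B_m^T = 0 with B_m = W_m^T * B, then the residual R_m = A * X_m + X_m * A^T + B * B^T of the approximation X_m = V_m * Y_m * V_m^T equals Γ * Y_m * V_m^T + V_m * Y_m * Γ^T; consequently, if Y_m is symmetric, ‖R_m‖ ≤ 2 ‖Γ * Y_m * V_m^T‖ in the tensor Frobenius norm. -/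
open Matrix

/-- Multi-index type: an `N`-tuple of indices with mode sizes `d i`. -/
abbrev Idx {N : ℕ} (d : Fin N → ℕ) : Type := ∀ i, Fin (d i)

/-- The Einstein product, contracting over the middle multi-index `K`:
`(A *_M B)_{j,i} = ∑_k A_{j,k} B_{k,i}`. -/
def eprod {J K I : Type*} [Fintype K] (A : Matrix J K ℝ) (B : Matrix K I ℝ) :
    Matrix J I ℝ :=
  Matrix.of fun j i => ∑ k, A j k * B k i

/-- The identity (diagonal) tensor. -/
def idT (J : Type*) [DecidableEq J] : Matrix J J ℝ :=
  Matrix.of fun j i => if j = i then 1 else 0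
/-- The trace of a square tensor. -/
def ttr {J : Type*} [Fintype J] (A : Matrix J J ℝ) : ℝ := ∑ j, A j j

/-- The Frobenius tensor norm ‖X‖ = sqrt(tr(Xᵀ * X)). -/
noncomputable def fnorm {J K : Type*} [Fintype J] [Fintype K] (X : Matrix J K ℝ) : ℝ :=
  Real.sqrt (ttr (eprod Xᵀ X))

lemma eprod_eq_mul {J K I : Type*} [Fintype K] (A : Matrix J K ℝ) (B : Matrix K I ℝ) :
    eprod A B = A * B := by
  ext j i; simp [eprod, Matrix.mul_apply]

lemma idT_eq_one {J : Type*} [DecidableEq J] : idT J = (1 : Matrix J J ℝ) := by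
  ext j i; simp [idT, Matrix.one_apply]

attribute [local instance] Matrix.frobeniusSeminormedAddCommGroup

lemma fnorm_eq_norm {J K : Type*} [Fintype J] [Fintype K] (X : Matrix J K ℝ) :
    fnorm X = ‖X‖ := by
  rw [fnorm, Matrix.frobenius_norm_def, ← Real.sqrt_eq_rpow]
  congr 1
  simp only [ttr, eprod, Matrix.of_apply, Matrix.transpose_apply]
  rw [Finset.sum_comm]
  refine Finset.sum_congr rfl fun i _ => Finset.sum_congr rfl fun j _ => ?_
  rw [show ((2:ℝ)) = ((2:ℕ):ℝ) by norm_num, Real.rpow_natCast, Real.norm_eq_abs,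
    sq_abs, sq]

/-- residual of the Galerkin approximation of the tensor Lyapunov
equation in the rational block Lanczos setting.  All tensors are 4th-order and
all products are Einstein products over two modes. -/
theorem lyapunov_residual {J1 J2 K1 K2 m : ℕ}
    (A : Matrix (Fin J1 × Fin J2) (Fin J1 × Fin J2) ℝ)
    (B : Matrix (Fin J1 × Fin J2) (Fin K1 × Fin K2) ℝ)
    (V W : Matrix (Fin J1 × Fin J2) (Fin K1 × Fin (m * K2)) ℝ)
    -- data defining Γ = (V_m W_mᵀ − I) * A * V_{m+1} * H_{m+1,m} * E_mᵀ * H_m⁻¹ :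
    (Vnext : Matrix (Fin J1 × Fin J2) (Fin K1 × Fin K2) ℝ)
    (Hsub : Matrix (Fin K1 × Fin K2) (Fin K1 × Fin K2) ℝ)
    (E : Matrix (Fin K1 × Fin (m * K2)) (Fin K1 × Fin K2) ℝ)
    (Hinv : Matrix (Fin K1 × Fin (m * K2)) (Fin K1 × Fin (m * K2)) ℝ)
    (Y : Matrix (Fin K1 × Fin (m * K2)) (Fin K1 × Fin (m * K2)) ℝ)
    (Γ : Matrix (Fin J1 × Fin J2) (Fin K1 × Fin (m * K2)) ℝ)
    (hΓ : Γ = eprod (eprod (eprod (eprod (eprod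
        (eprod V Wᵀ - idT (Fin J1 × Fin J2)) A) Vnext) Hsub) Eᵀ) Hinv)
    -- A * V_m = V_m * T_m + Γ, where T_m = W_mᵀ * A * V_m :
    (hdecomp : eprod A V = eprod V (eprod Wᵀ (eprod A V)) + Γ)
    -- bi-orthogonality W_mᵀ * V_m = I_m :
    (hbi : eprod Wᵀ V = idT (Fin K1 × Fin (m * K2)))
    -- V_m * W_mᵀ * B = B :
    (hB : eprod V (eprod Wᵀ B) = B)
    -- Y_m solves the reduced Lyapunov equation with T_m, B_m = W_mᵀ * B :
    (hY : eprod (eprod Wᵀ (eprod A V)) Y + eprod Y (eprod Wᵀ (eprod A V))ᵀ +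
        eprod (eprod Wᵀ B) (eprod Wᵀ B)ᵀ = 0) :
    -- the residual of X_m = V_m * Y_m * V_mᵀ :
    eprod A (eprod (eprod V Y) Vᵀ) + eprod (eprod (eprod V Y) Vᵀ) Aᵀ + eprod B Bᵀ
      = eprod (eprod Γ Y) Vᵀ + eprod (eprod V Y) Γᵀ ∧
    (Yᵀ = Y →
      fnorm (eprod A (eprod (eprod V Y) Vᵀ) + eprod (eprod (eprod V Y) Vᵀ) Aᵀ +
          eprod B Bᵀ)
        ≤ 2 * fnorm (eprod (eprod Γ Y) Vᵀ)) := by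
  simp only [eprod_eq_mul] at *
  set T := Wᵀ * (A * V) with hT
  have hmain : A * (V * Y * Vᵀ) + V * Y * Vᵀ * Aᵀ + B * Bᵀ
      = Γ * Y * Vᵀ + V * Y * Γᵀ := by
    have h1 : A * (V * Y * Vᵀ) = V * T * Y * Vᵀ + Γ * Y * Vᵀ := by
      calc A * (V * Y * Vᵀ) = (A * V) * Y * Vᵀ := by simp only [Matrix.mul_assoc, Matrix.mul_add, Matrix.add_mul,
              Matrix.transpose_mul, Matrix.transpose_transpose]; try abel
        _ = (V * T + Γ) * Y * Vᵀ := by rw [← hdecomp]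
        _ = V * T * Y * Vᵀ + Γ * Y * Vᵀ := by simp only [Matrix.mul_assoc, Matrix.mul_add, Matrix.add_mul,
              Matrix.transpose_mul, Matrix.transpose_transpose]; try abel
    have h2 : V * Y * Vᵀ * Aᵀ = V * (Y * Tᵀ) * Vᵀ + V * Y * Γᵀ := by
      calc V * Y * Vᵀ * Aᵀ = V * Y * (A * V)ᵀ := by
            rw [Matrix.transpose_mul]; simp only [Matrix.mul_assoc, Matrix.mul_add, Matrix.add_mul,
              Matrix.transpose_mul, Matrix.transpose_transpose]; try abel
        _ = V * Y * (V * T + Γ)ᵀ := by rw [← hdecomp]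
        _ = V * (Y * Tᵀ) * Vᵀ + V * Y * Γᵀ := by
            rw [Matrix.transpose_add, Matrix.transpose_mul]; simp only [Matrix.mul_assoc, Matrix.mul_add, Matrix.add_mul,
              Matrix.transpose_mul, Matrix.transpose_transpose]; try abel
    have h3 : B * Bᵀ = V * ((Wᵀ * B) * (Wᵀ * B)ᵀ) * Vᵀ := by
      conv_lhs => rw [← hB]
      rw [Matrix.transpose_mul]; simp only [Matrix.mul_assoc, Matrix.mul_add, Matrix.add_mul,
              Matrix.transpose_mul, Matrix.transpose_transpose]; try abel
    rw [h1, h2, h3]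
    have : V * T * Y * Vᵀ + (V * (Y * Tᵀ) * Vᵀ) + V * ((Wᵀ * B) * (Wᵀ * B)ᵀ) * Vᵀ
        = V * (T * Y + Y * Tᵀ + (Wᵀ * B) * (Wᵀ * B)ᵀ) * Vᵀ := by simp only [Matrix.mul_assoc, Matrix.mul_add, Matrix.add_mul,
              Matrix.transpose_mul, Matrix.transpose_transpose]; try abel
    have hz : V * (T * Y + Y * Tᵀ + (Wᵀ * B) * (Wᵀ * B)ᵀ) * Vᵀ = 0 := by
      rw [hY]; simp
    calc V * T * Y * Vᵀ + Γ * Y * Vᵀ + (V * (Y * Tᵀ) * Vᵀ + V * Y * Γᵀ)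
        + V * ((Wᵀ * B) * (Wᵀ * B)ᵀ) * Vᵀ
        = V * (T * Y + Y * Tᵀ + (Wᵀ * B) * (Wᵀ * B)ᵀ) * Vᵀ
          + (Γ * Y * Vᵀ + V * Y * Γᵀ) := by simp only [Matrix.mul_assoc, Matrix.mul_add, Matrix.add_mul,
              Matrix.transpose_mul, Matrix.transpose_transpose]; try abel
      _ = Γ * Y * Vᵀ + V * Y * Γᵀ := by rw [hz]; simp
  refine ⟨hmain, fun hsym => ?_⟩
  have htr : V * Y * Γᵀ = (Γ * Y * Vᵀ)ᵀ := by
    simp only [Matrix.transpose_mul, Matrix.transpose_transpose, hsym]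
    simp only [Matrix.mul_assoc, Matrix.mul_add, Matrix.add_mul,
              Matrix.transpose_mul, Matrix.transpose_transpose]; try abel
  rw [hmain, htr, fnorm_eq_norm, fnorm_eq_norm]
  calc ‖Γ * Y * Vᵀ + (Γ * Y * Vᵀ)ᵀ‖ ≤ ‖Γ * Y * Vᵀ‖ + ‖(Γ * Y * Vᵀ)ᵀ‖ := norm_add_le _ _
    _ = 2 * ‖Γ * Y * Vᵀ‖ := by rw [Matrix.frobenius_norm_transpose]; ring
end

section
/- If every eigenvalue of the square tensor A has negative real part, then for every initial state X_0, the solution X(t) = e^{A(t−t_0)} *_N X_0 of the homogeneous MLTI system Ẋ(t) = A *_N X(t) satisfies ‖X(t)‖ → 0 as t → ∞ (asymptotic stability). -/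
/-!
Through the unfolding Ψ, `A` is a real square matrix, `texp` is its matrix exponential, and the
hypothesis says that the complexification `B` of `A` has its spectrum in the open left half-plane.
Since `ℂⁿ` is the sum of the generalized eigenspaces of `B`, it suffices to treat a generalized
eigenvector `w` for `μ`: there `B - μ` is nilpotent, so
`exp (t B) w = exp (t μ) ∑_{i<k} tⁱ / i! (B - μ)ⁱ w`, which tends to `0` because `Re μ < 0`.
The real solution is the real part of the complex one.
-/

open Matrix

/-- The unfolding map Ψ (column-major). -/
def unfold {N M : ℕ} {dJ : Fin N → ℕ} {dK : Fin M → ℕ}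
    (A : Matrix (Idx dJ) (Idx dK) ℝ) :
    Matrix (Fin (∏ i, dJ i)) (Fin (∏ i, dK i)) ℝ :=
  Matrix.of fun p q => A (finPiFinEquiv.symm p) (finPiFinEquiv.symm q)

/-- The tensor exponential e^A (Einstein-product power series). -/
noncomputable def texp {q : Type*} [Fintype q] [DecidableEq q] (A : Matrix q q ℝ) :
    Matrix q q ℝ :=
  ∑' k : ℕ, ((k.factorial : ℝ)⁻¹) • A ^ k

open Filter Topology NormedSpace Finset

theorem Complex.tendsto_pow_mul_exp_mul_atTop_nhds_zero {μ : ℂ} (hμ : μ.re < 0) (i : ℕ) :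
    Tendsto (fun t : ℝ => (t : ℂ) ^ i * Complex.exp (t * μ)) atTop (𝓝 0) := by
  have hreal := tendsto_rpow_mul_exp_neg_mul_atTop_nhds_zero i (-μ.re) (neg_pos.mpr hμ)
  rw [tendsto_zero_iff_norm_tendsto_zero]
  refine hreal.congr' ?_
  filter_upwards [eventually_ge_atTop 0] with t ht
  rw [norm_mul, norm_pow, Complex.norm_exp, Complex.norm_real, Real.norm_of_nonneg ht,
    Real.rpow_natCast]
  simp [mul_comm]

theorem Module.End.mem_spectrum_of_mem_maxGenEigenspace {K V : Type*} [Field K]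
    [AddCommGroup V] [Module K V] [FiniteDimensional K V] {f : Module.End K V} {μ : K} {w : V}
    (hw : w ∈ f.maxGenEigenspace μ) (hw0 : w ≠ 0) : μ ∈ spectrum K f := by
  have h : f.HasUnifEigenvalue μ ⊤ := (Submodule.ne_bot_iff _).mpr ⟨w, hw, hw0⟩
  exact ((Module.End.hasUnifEigenvalue_iff_hasUnifEigenvalue_one (by simp)).mp h).mem_spectrum

namespace Matrix

variable {q : Type*} [Fintype q] [DecidableEq q]

section RCLike

variable {𝕂 : Type*} [RCLike 𝕂]

theorem exp_mulVec_eq_sum_of_pow_mulVec_eq_zero {N : Matrix q q 𝕂} {w : q → 𝕂} {k : ℕ}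
    (hN : N ^ k *ᵥ w = 0) :
    exp N *ᵥ w = ∑ i ∈ range k, (i.factorial : 𝕂)⁻¹ • (N ^ i *ᵥ w) := by
  -- `exp` does not depend on a norm; any matrix norm gives the summability of the series.
  have hexp : HasSum (fun i => (i.factorial : 𝕂)⁻¹ • N ^ i) (exp N) := by
    open scoped Norms.Operator in exact exp_series_hasSum_exp' N
  have hsum : HasSum (fun i => (i.factorial : 𝕂)⁻¹ • (N ^ i *ᵥ w)) (exp N *ᵥ w) := by
    simpa only [Function.comp_def, mulVec.addMonoidHomLeft, AddMonoidHom.coe_mk, ZeroHom.coe_mk,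
      smul_mulVec] using hexp.map (mulVec.addMonoidHomLeft w)
        (continuous_id.matrix_mulVec continuous_const)
  refine hsum.unique (hasSum_sum_of_ne_finset_zero fun i hi => ?_)
  rw [mem_range, not_lt] at hi
  rw [← Nat.sub_add_cancel hi, pow_add, ← mulVec_mulVec, hN, mulVec_zero, smul_zero]

theorem exp_mulVec_eq_of_pow_sub_smul_mulVec_eq_zero {B : Matrix q q 𝕂} {μ : 𝕂} {w : q → 𝕂}
    {k : ℕ} (hw : (B - μ • 1) ^ k *ᵥ w = 0) :
    exp B *ᵥ w = exp μ • ∑ i ∈ range k, (i.factorial : 𝕂)⁻¹ • ((B - μ • 1) ^ i *ᵥ w) := by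
  have hscalar : exp (algebraMap 𝕂 (Matrix q q 𝕂) μ) = algebraMap 𝕂 _ (exp μ) := by
    open scoped Norms.Operator in exact (algebraMap_exp_comm μ).symm
  have hexp : exp B = exp μ • exp (B - μ • 1) := by
    conv_lhs => rw [← add_sub_cancel (algebraMap 𝕂 (Matrix q q 𝕂) μ) B]
    rw [exp_add_of_commute _ _ (Algebra.commute_algebraMap_left _ _), hscalar, ← Algebra.smul_def,
      Algebra.algebraMap_eq_smul_one]
  rw [hexp, smul_mulVec, exp_mulVec_eq_sum_of_pow_mulVec_eq_zero hw]

end RCLike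

theorem tendsto_exp_smul_mulVec_of_mem_maxGenEigenspace {B : Matrix q q ℂ} {μ : ℂ}
    (hμ : μ.re < 0) {w : q → ℂ} (hw : w ∈ Module.End.maxGenEigenspace (toLin' B) μ) :
    Tendsto (fun t : ℝ => exp ((t : ℂ) • B) *ᵥ w) atTop (𝓝 0) := by
  obtain ⟨k, hk⟩ := (Module.End.mem_maxGenEigenspace _ _ _).mp hw
  have hBk : (B - μ • 1) ^ k *ᵥ w = 0 := by
    rwa [← toLin'_apply, toLin'_pow, map_sub, map_smul, toLin'_one]
  have hformula (t : ℝ) : exp ((t : ℂ) • B) *ᵥ w = ∑ i ∈ range k,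
      ((t : ℂ) ^ i * Complex.exp (t * μ)) • ((i.factorial : ℂ)⁻¹ • ((B - μ • 1) ^ i *ᵥ w)) := by
    have hsub : (t : ℂ) • B - (t * μ : ℂ) • 1 = (t : ℂ) • (B - μ • 1) := by
      rw [mul_smul, ← smul_sub]
    have htk : ((t : ℂ) • B - (t * μ : ℂ) • 1) ^ k *ᵥ w = 0 := by
      rw [hsub, smul_pow, smul_mulVec, hBk, smul_zero]
    rw [exp_mulVec_eq_of_pow_sub_smul_mulVec_eq_zero htk, ← Complex.exp_eq_exp_ℂ, smul_sum]
    refine sum_congr rfl fun i _ => ?_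
    rw [hsub, smul_pow, smul_mulVec]
    module
  simp_rw [hformula]
  simpa using tendsto_finsetSum (range k) fun i _ =>
    (Complex.tendsto_pow_mul_exp_mul_atTop_nhds_zero hμ i).smul_const
      ((i.factorial : ℂ)⁻¹ • ((B - μ • 1) ^ i *ᵥ w))

theorem tendsto_exp_smul_mulVec_atTop_nhds_zero {B : Matrix q q ℂ}
    (hB : ∀ μ ∈ spectrum ℂ B, μ.re < 0) (v : q → ℂ) :
    Tendsto (fun t : ℝ => exp ((t : ℂ) • B) *ᵥ v) atTop (𝓝 0) := by
  have hv : v ∈ ⨆ μ, Module.End.maxGenEigenspace (toLin' B) μ := by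
    rw [Module.End.iSup_maxGenEigenspace_eq_top]; trivial
  refine Submodule.iSup_induction _ (motive := fun w =>
    Tendsto (fun t : ℝ => exp ((t : ℂ) • B) *ᵥ w) atTop (𝓝 0)) hv ?_ ?_ ?_
  · intro μ w hw
    rcases eq_or_ne w 0 with rfl | hw0
    · simp
    have hμ := Module.End.mem_spectrum_of_mem_maxGenEigenspace hw hw0
    rw [spectrum_toLin'] at hμ
    exact tendsto_exp_smul_mulVec_of_mem_maxGenEigenspace (hB μ hμ) hw
  · simp
  · intro x y hx hy
    simpa [mulVec_add] using hx.add hy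

end Matrix

section Tensor

variable {q : Type*} [Fintype q] [DecidableEq q]

theorem texp_eq_exp (M : Matrix q q ℝ) : texp M = exp M := by
  rw [exp_eq_tsum ℝ]
  rfl

theorem ofReal_texp_mulVec (M : Matrix q q ℝ) (v : q → ℝ) :
    (fun j => ((texp M *ᵥ v) j : ℂ)) = exp (M.map (algebraMap ℝ ℂ)) *ᵥ (fun j => (v j : ℂ)) := by
  have hmap : (exp M).map (algebraMap ℝ ℂ) = exp (M.map (algebraMap ℝ ℂ)) := by
    open scoped Norms.Operator in
    exact map_exp (algebraMap ℝ ℂ).mapMatrix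
      (continuous_id.matrix_map (continuous_algebraMap ℝ ℂ)) M
  ext j
  rw [← hmap, texp_eq_exp]
  exact RingHom.map_mulVec (algebraMap ℝ ℂ) _ v j

theorem tendsto_texp_smul_mulVec_atTop_nhds_zero {A : Matrix q q ℝ}
    (hA : ∀ μ ∈ spectrum ℂ (A.map (algebraMap ℝ ℂ)), μ.re < 0) (v : q → ℝ) :
    Tendsto (fun t : ℝ => texp (t • A) *ᵥ v) atTop (𝓝 0) := by
  have hre (t : ℝ) : texp (t • A) *ᵥ v =
      fun j => ((exp ((t : ℂ) • A.map (algebraMap ℝ ℂ)) *ᵥ fun j => (v j : ℂ)) j).re := by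
    have hscale : (t • A).map (algebraMap ℝ ℂ) = (t : ℂ) • A.map (algebraMap ℝ ℂ) := by
      ext
      simp
    simp only [← hscale, ← ofReal_texp_mulVec, Complex.ofReal_re]
  have hcont : Continuous fun u : q → ℂ => fun j => (u j).re := by fun_prop
  simp only [hre]
  simpa [Function.comp_def, Pi.zero_def] using
    (hcont.tendsto 0).comp (Matrix.tendsto_exp_smul_mulVec_atTop_nhds_zero hA fun j => (v j : ℂ))

theorem unfold_eq_reindex {N M : ℕ} {dJ : Fin N → ℕ} {dK : Fin M → ℕ}
    (A : Matrix (Idx dJ) (Idx dK) ℝ) : unfold A = reindex finPiFinEquiv finPiFinEquiv A := rfl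

theorem spectrum_map_unfold {N : ℕ} {dJ : Fin N → ℕ} (A : Matrix (Idx dJ) (Idx dJ) ℝ) :
    spectrum ℂ ((unfold A).map (algebraMap ℝ ℂ)) = spectrum ℂ (A.map (algebraMap ℝ ℂ)) := by
  rw [unfold_eq_reindex, reindex_apply, ← submatrix_map, ← reindex_apply,
    ← coe_reindexAlgEquiv ℂ ℂ, AlgEquiv.spectrum_eq]

end Tensor

/-- if every eigenvalue of A has negative real part, then the solution
X(t) = e^{A(t−t₀)} *_N X₀ of Ẋ = A *_N X satisfies ‖X(t)‖ → 0 as t → ∞. -/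
theorem asymptotic_stability {N : ℕ} (dJ : Fin N → ℕ)
    (A : Matrix (Idx dJ) (Idx dJ) ℝ)
    (hstab : ∀ mu ∈ spectrum ℂ ((unfold A).map (algebraMap ℝ ℂ)), mu.re < 0)
    (X0 : Idx dJ → ℝ) (t0 : ℝ) :
    Filter.Tendsto
      (fun t : ℝ => Real.sqrt (∑ j, ((texp ((t - t0) • A)).mulVec X0 j) ^ 2))
      Filter.atTop (nhds 0) := by
  rw [spectrum_map_unfold] at hstab
  have hdecay := (tendsto_texp_smul_mulVec_atTop_nhds_zero hstab X0).comp
    (tendsto_atTop_add_const_right atTop (-t0) tendsto_id)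
  have hnorm : Continuous fun v : Idx dJ → ℝ => √(∑ j, v j ^ 2) := by fun_prop
  simpa [Function.comp_def, sub_eq_add_neg] using (hnorm.tendsto 0).comp hdecay
end
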